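/- arXiv:1303.6379 — 5 statements merged into one kernel-verified Lean document; each statement's English description precedes it below -/
import Mathlib

section
/- For a continuous function g on [0,T] and 0 ≤ t ≤ t+r ≤ T, the increment of the running maximum of g floored at 0 satisfies: max{0, sup_{0≤s≤t+r} g(s)} − max{0, sup_{0≤s≤t} g(s)} ≤ sup_{t≤s,u≤t+r} (g(s) − g(u)). -/
open Set

/-- Oscillation estimate for the running maximum floored at 0. -/
theorem stmt0 (T : ℝ) (g : ℝ → ℝ) (hg : ContinuousOn g (Icc 0 T))
    (t r : ℝ) (ht : 0 ≤ t) (hr : 0 ≤ r) (htr : t + r ≤ T) :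
    max 0 (sSup (g '' Icc 0 (t + r))) - max 0 (sSup (g '' Icc 0 t)) ≤
      sSup ((fun p : ℝ × ℝ => g p.1 - g p.2) '' (Icc t (t + r) ×ˢ Icc t (t + r))) := by
  have htt : t ≤ t + r := le_add_of_nonneg_right hr
  have hsub1 : Icc (0:ℝ) (t + r) ⊆ Icc 0 T := Icc_subset_Icc le_rfl htr
  have hsub2 : Icc (0:ℝ) t ⊆ Icc 0 T := Icc_subset_Icc le_rfl (htt.trans htr)
  have hsub3 : Icc t (t + r) ⊆ Icc 0 T := Icc_subset_Icc ht htr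
  -- maximum of g on [0, t+r]
  obtain ⟨x, hx, hxmax⟩ := isCompact_Icc.exists_isMaxOn
    ⟨0, left_mem_Icc.2 (ht.trans htt)⟩ (hg.mono hsub1)
  have hM2 : sSup (g '' Icc 0 (t + r)) = g x := by
    apply IsGreatest.csSup_eq
    constructor
    · exact mem_image_of_mem g hx
    · rintro _ ⟨y, hy, rfl⟩
      exact hxmax hy
  -- boundedness of sup over [0,t]
  have hbdd1 : BddAbove (g '' Icc 0 t) :=
    (isCompact_Icc.image_of_continuousOn (hg.mono hsub2)).bddAbove
  have hgt_le : g t ≤ sSup (g '' Icc 0 t) :=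
    le_csSup hbdd1 (mem_image_of_mem g (right_mem_Icc.2 ht))
  -- the RHS set
  set S := (fun p : ℝ × ℝ => g p.1 - g p.2) '' (Icc t (t + r) ×ˢ Icc t (t + r)) with hS
  have hcomp : IsCompact S := by
    apply (isCompact_Icc.prod isCompact_Icc).image_of_continuousOn
    apply ContinuousOn.sub
    · exact hg.comp continuous_fst.continuousOn
        (fun p hp => hsub3 (mem_prod.1 hp).1)
    · exact hg.comp continuous_snd.continuousOn
        (fun p hp => hsub3 (mem_prod.1 hp).2)
  have hbddS : BddAbove S := hcomp.bddAbove
  have hmemtt : ((t, t) : ℝ × ℝ) ∈ Icc t (t + r) ×ˢ Icc t (t + r) :=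
    ⟨left_mem_Icc.2 htt, left_mem_Icc.2 htt⟩
  have hS0 : (0 : ℝ) ≤ sSup S := by
    have : g t - g t ∈ S := mem_image_of_mem _ hmemtt
    simpa using le_csSup hbddS this
  rcases le_or_gt x t with hxt | hxt
  · -- max on [0,t+r] attained in [0,t]
    have : g x ≤ sSup (g '' Icc 0 t) :=
      le_csSup hbdd1 (mem_image_of_mem g ⟨hx.1, hxt⟩)
    have h1 : max 0 (sSup (g '' Icc 0 (t + r))) ≤ max 0 (sSup (g '' Icc 0 t)) := by
      rw [hM2]
      exact max_le_max le_rfl this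
    linarith
  · rcases le_or_gt (g x) 0 with hgx | hgx
    · have h1 : max 0 (sSup (g '' Icc 0 (t + r))) = 0 := by
        rw [hM2]; exact max_eq_left hgx
      have h2 : (0:ℝ) ≤ max 0 (sSup (g '' Icc 0 t)) := le_max_left _ _
      linarith
    · have hmem : ((x, t) : ℝ × ℝ) ∈ Icc t (t + r) ×ˢ Icc t (t + r) :=
        ⟨⟨hxt.le, hx.2⟩, left_mem_Icc.2 htt⟩
      have h3 : g x - g t ≤ sSup S :=
        le_csSup hbddS (mem_image_of_mem _ hmem)
      have h1 : max 0 (sSup (g '' Icc 0 (t + r))) = g x := by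
        rw [hM2]; exact max_eq_right hgx.le
      have h2 : g t ≤ max 0 (sSup (g '' Icc 0 t)) := hgt_le.trans (le_max_right _ _)
      linarith
end

section
/- Let x ≥ 0, α ∈ ℝ, σ > 0, and let W : [0,T] → ℝ be continuous with W(0)=0. Suppose X : [0,T] → ℝ satisfies X(t) = x − α∫₀ᵗ X(s)ds + σW(t) + max{0, sup_{0≤s≤t}(−x + α∫₀ˢ X(u)du − σW(s))}. Then sup_{0≤t≤T}|X(t)| ≤ 2(x+σ) e^{2|α|T} · max(1, sup_{0≤t≤T}|W(t)|). -/
open Set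

/-- Uniform sup-norm bound for the reflected OU-type path driven by a continuous path `W`. -/
theorem stmt1 (T x α σ : ℝ) (hT : 0 < T) (hx : 0 ≤ x) (hσ : 0 < σ)
    (W X : ℝ → ℝ) (hWc : ContinuousOn W (Icc 0 T)) (hW0 : W 0 = 0)
    (hXc : ContinuousOn X (Icc 0 T))
    (hEq : ∀ t ∈ Icc 0 T,
      X t = x - α * (∫ s in (0:ℝ)..t, X s) + σ * W t +
        max 0 (sSup ((fun s => -x + α * (∫ u in (0:ℝ)..s, X u) - σ * W s) '' Icc 0 t))) :
    sSup ((fun t => |X t|) '' Icc 0 T) ≤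
      2 * (x + σ) * Real.exp (2 * |α| * T) * max 1 (sSup ((fun t => |W t|) '' Icc 0 T)) := by
  set MW := sSup ((fun t => |W t|) '' Icc 0 T) with hMWdef
  have h0T : (0:ℝ) ∈ Icc (0:ℝ) T := ⟨le_refl 0, hT.le⟩
  have hWb : BddAbove ((fun t => |W t|) '' Icc 0 T) :=
    (isCompact_Icc.image_of_continuousOn hWc.abs).bddAbove
  have hMW0 : 0 ≤ MW := by
    have := le_csSup hWb ⟨0, h0T, rfl⟩
    simpa [hW0] using this
  have hMWle : ∀ s ∈ Icc (0:ℝ) T, |W s| ≤ MW := fun s hs => le_csSup hWb ⟨s, hs, rfl⟩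
  set K := 2 * |α| with hKdef
  set A := 2 * x + 2 * σ * MW with hAdef
  have hK0 : 0 ≤ K := by positivity
  have hA0 : 0 ≤ A := by positivity
  -- integrability of X and |X| on subintervals
  have hXint : ∀ t ∈ Icc (0:ℝ) T, IntervalIntegrable X MeasureTheory.volume 0 t := by
    intro t ht
    exact ContinuousOn.intervalIntegrable_of_Icc ht.1
      (hXc.mono (Icc_subset_Icc le_rfl ht.2))
  have hXaint : ∀ t ∈ Icc (0:ℝ) T, IntervalIntegrable (fun s => |X s|) MeasureTheory.volume 0 t := by
    intro t ht
    exact ContinuousOn.intervalIntegrable_of_Icc ht.1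
      ((hXc.mono (Icc_subset_Icc le_rfl ht.2)).abs)
  set g := fun t => ∫ s in (0:ℝ)..t, |X s| with hgdef
  have hg0 : g 0 = 0 := intervalIntegral.integral_same
  have hgnn : ∀ t ∈ Icc (0:ℝ) T, 0 ≤ g t := by
    intro t ht
    exact intervalIntegral.integral_nonneg ht.1 (fun u _ => abs_nonneg _)
  have hgmono : ∀ s t : ℝ, s ∈ Icc (0:ℝ) t → t ∈ Icc (0:ℝ) T → g s ≤ g t := by
    intro s t hs ht
    exact intervalIntegral.integral_mono_interval le_rfl hs.1 hs.2
      (Filter.Eventually.of_forall fun u => abs_nonneg _) (hXaint t ht)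
  -- the key pointwise estimate
  have key : ∀ t ∈ Icc (0:ℝ) T, |X t| ≤ K * g t + A := by
    intro t ht
    set Y := fun s : ℝ => x - α * (∫ u in (0:ℝ)..s, X u) + σ * W s with hYdef
    set B := x + |α| * g t + σ * MW with hBdef
    have hB0 : 0 ≤ B := by
      have := hgnn t ht
      positivity
    have hYb : ∀ s ∈ Icc (0:ℝ) t, |Y s| ≤ B := by
      intro s hs
      have hsT : s ∈ Icc (0:ℝ) T := ⟨hs.1, hs.2.trans ht.2⟩
      have h1 : |∫ u in (0:ℝ)..s, X u| ≤ g s := by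
        simpa using intervalIntegral.abs_integral_le_integral_abs hs.1 (f := X)
      have h2 : g s ≤ g t := hgmono s t hs ht
      have h3 : |W s| ≤ MW := hMWle s hsT
      have : |Y s| ≤ x + |α| * |∫ u in (0:ℝ)..s, X u| + σ * |W s| := by
        rw [hYdef]
        calc |x - α * (∫ u in (0:ℝ)..s, X u) + σ * W s|
            ≤ |x - α * (∫ u in (0:ℝ)..s, X u)| + |σ * W s| := abs_add_le _ _
          _ ≤ |x| + |α * (∫ u in (0:ℝ)..s, X u)| + |σ * W s| := by
              gcongr; exact abs_sub _ _
          _ = x + |α| * |∫ u in (0:ℝ)..s, X u| + σ * |W s| := by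
              rw [abs_of_nonneg hx, abs_mul, abs_mul, abs_of_nonneg hσ.le]
      calc |Y s| ≤ x + |α| * |∫ u in (0:ℝ)..s, X u| + σ * |W s| := this
        _ ≤ x + |α| * g t + σ * MW := by gcongr; exact h1.trans h2
    -- the reflected term
    have hneg : ∀ s ∈ Icc (0:ℝ) t,
        (fun s => -x + α * (∫ u in (0:ℝ)..s, X u) - σ * W s) s ≤ B := by
      intro s hs
      have h := (abs_le.mp (hYb s hs)).1
      have hys : Y s = x - α * (∫ u in (0:ℝ)..s, X u) + σ * W s := rfl
      simp only []
      linarith [hys ▸ h]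
    have hbdd : BddAbove ((fun s => -x + α * (∫ u in (0:ℝ)..s, X u) - σ * W s) '' Icc 0 t) :=
      ⟨B, by rintro _ ⟨s, hs, rfl⟩; exact hneg s hs⟩
    have hSle : sSup ((fun s => -x + α * (∫ u in (0:ℝ)..s, X u) - σ * W s) '' Icc 0 t) ≤ B :=
      Real.sSup_le (by rintro _ ⟨s, hs, rfl⟩; exact hneg s hs) hB0
    have hSge : -x + α * (∫ u in (0:ℝ)..t, X u) - σ * W t ≤
        sSup ((fun s => -x + α * (∫ u in (0:ℝ)..s, X u) - σ * W s) '' Icc 0 t) :=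
      le_csSup hbdd ⟨t, ⟨ht.1, le_rfl⟩, rfl⟩
    have hXt := hEq t ht
    have hXnn : 0 ≤ X t := by
      rw [hXt]
      have h1 : -x + α * (∫ u in (0:ℝ)..t, X u) - σ * W t ≤
          max 0 (sSup ((fun s => -x + α * (∫ u in (0:ℝ)..s, X u) - σ * W s) '' Icc 0 t)) :=
        hSge.trans (le_max_right _ _)
      linarith
    have hXup : X t ≤ 2 * B := by
      rw [hXt]
      have h1 : max 0 (sSup ((fun s => -x + α * (∫ u in (0:ℝ)..s, X u) - σ * W s) '' Icc 0 t)) ≤ B :=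
        max_le hB0 hSle
      have h2 : Y t ≤ B := (le_abs_self _).trans (hYb t ⟨ht.1, le_rfl⟩)
      have hyt : Y t = x - α * (∫ s in (0:ℝ)..t, X s) + σ * W t := rfl
      linarith [hyt ▸ h2]
    have : |X t| ≤ 2 * B := by rwa [abs_of_nonneg hXnn]
    calc |X t| ≤ 2 * B := this
      _ = K * g t + A := by rw [hBdef, hKdef, hAdef]; ring
  -- Gronwall
  have hgc : ContinuousOn g (Icc 0 T) := by
    have : MeasureTheory.IntegrableOn (fun s => |X s|) (Icc 0 T) MeasureTheory.volume :=
      (hXc.abs).integrableOn_compact isCompact_Icc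
    exact (intervalIntegral.continuousOn_primitive_Icc this).congr
      (fun t ht => (intervalIntegral.integral_of_le ht.1).trans MeasureTheory.integral_Icc_eq_integral_Ioc.symm)
  have hderiv : ∀ t ∈ Ico (0:ℝ) T, HasDerivWithinAt g (|X t|) (Ici t) t := by
    intro t ht
    have htT : t ∈ Icc (0:ℝ) T := ⟨ht.1, ht.2.le⟩
    have hmem : Icc (0:ℝ) T ∈ nhdsWithin t (Ici t) := Icc_mem_nhdsGE_of_mem ht
    have hmem' : Icc (0:ℝ) T ∈ nhdsWithin t (Ioi t) :=
      nhdsWithin_mono t Ioi_subset_Ici_self hmem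
    have hmeas : StronglyMeasurableAtFilter (fun s => |X s|) (nhdsWithin t (Ioi t))
        MeasureTheory.volume :=
      ⟨Icc 0 T, hmem', ((hXc.abs).aestronglyMeasurable measurableSet_Icc)⟩
    have hcont : ContinuousWithinAt (fun s => |X s|) (Ioi t) t :=
      (((hXc.abs) t htT).mono_of_mem_nhdsWithin hmem).mono Ioi_subset_Ici_self
    exact intervalIntegral.integral_hasDerivWithinAt_right (hXaint t htT) hmeas hcont
  have hgron : ∀ t ∈ Icc (0:ℝ) T, ‖g t‖ ≤ gronwallBound 0 K A (t - 0) := by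
    apply norm_le_gronwallBound_of_norm_deriv_right_le hgc hderiv
    · simp [hg0]
    · intro t ht
      have htT : t ∈ Icc (0:ℝ) T := ⟨ht.1, ht.2.le⟩
      have h1 := key t htT
      have h2 : ‖g t‖ = g t := by rw [Real.norm_eq_abs, abs_of_nonneg (hgnn t htT)]
      rw [Real.norm_eq_abs, abs_abs, h2]
      exact h1
  -- conclude the pointwise bound with the exponential
  have hfinal : ∀ t ∈ Icc (0:ℝ) T, |X t| ≤ A * Real.exp (K * T) := by
    intro t ht
    have h1 := key t ht
    have h2 : g t ≤ gronwallBound 0 K A t := by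
      have := hgron t ht
      rw [Real.norm_eq_abs, abs_of_nonneg (hgnn t ht)] at this
      simpa using this
    have h3 : K * g t + A ≤ K * gronwallBound 0 K A t + A := by nlinarith
    have h4 : K * gronwallBound 0 K A t + A ≤ A * Real.exp (K * T) := by
      by_cases hK : K = 0
      · rw [hK, gronwallBound_K0]
        have h5 : Real.exp ((0:ℝ) * T) = 1 := by norm_num
        rw [h5]
        nlinarith
      · rw [gronwallBound_of_K_ne_0 hK]
        have hKpos : 0 < K := lt_of_le_of_ne hK0 (Ne.symm hK)
        have hexp : Real.exp (K * t) ≤ Real.exp (K * T) := by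
          apply Real.exp_le_exp.mpr
          nlinarith [ht.2]
        have : K * (0 * Real.exp (K * t) + A / K * (Real.exp (K * t) - 1)) + A
            = A * Real.exp (K * t) := by field_simp; ring
        rw [this]
        nlinarith
    linarith
  have hsup : sSup ((fun t => |X t|) '' Icc 0 T) ≤ A * Real.exp (K * T) := by
    apply Real.sSup_le
    · rintro _ ⟨t, ht, rfl⟩; exact hfinal t ht
    · positivity
  refine hsup.trans ?_
  have hAle : A ≤ 2 * (x + σ) * max 1 MW := by
    have h1 : (1:ℝ) ≤ max 1 MW := le_max_left _ _
    have h2 : MW ≤ max 1 MW := le_max_right _ _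
    rw [hAdef]
    nlinarith
  have hexp : 0 < Real.exp (K * T) := Real.exp_pos _
  calc A * Real.exp (K * T) ≤ (2 * (x + σ) * max 1 MW) * Real.exp (K * T) := by nlinarith
    _ = 2 * (x + σ) * Real.exp (2 * |α| * T) * max 1 MW := by rw [hKdef]; ring
end

section
/- Under the same hypotheses, if in addition W is (H−ε)-Hölder continuous on [0,T] with Hölder seminorm ‖W‖_{H−ε,T}, then X is (H−ε)-Hölder continuous with ‖X‖_{H−ε,T} ≤ 2|α| ‖X‖_{∞,T} T^{1+ε−H} + 2σ ‖W‖_{H−ε,T}. -/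
/-!
`X = -Y + L` with `Y s = -x + α ∫₀ˢ X - σ W s` and `L t = max 0 (sup_{[0,t]} Y)`.
On `[θ, r]` every increment `Y s - Y θ` is at most `D = |α| ‖X‖_∞ (r - θ) + σ ‖W‖ (r - θ)^{H-ε}`,
and the reflection term `L` then grows by at most `D` between `θ` and `r`; hence
`|X r - X θ| ≤ 2 D`, and `r - θ ≤ T^{1+ε-H} (r - θ)^{H-ε}` gives the bound.
-/

open Set

theorem abs_max_zero_sSup_sub_le {Y : ℝ → ℝ} {a θ r D : ℝ} (haθ : a ≤ θ) (hθr : θ ≤ r)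
    (hbdd : BddAbove (Y '' Icc a r)) (hinc : ∀ s ∈ Icc θ r, Y s - Y θ ≤ D) :
    |max 0 (sSup (Y '' Icc a r)) - max 0 (sSup (Y '' Icc a θ))| ≤ D := by
  have hD : 0 ≤ D := by simpa using hinc θ ⟨le_rfl, hθr⟩
  have hsub : Y '' Icc a θ ⊆ Y '' Icc a r := image_mono (Icc_subset_Icc_right hθr)
  have hbddθ : BddAbove (Y '' Icc a θ) := hbdd.mono hsub
  have hmono : sSup (Y '' Icc a θ) ≤ sSup (Y '' Icc a r) :=
    csSup_le_csSup hbdd ((nonempty_Icc.2 haθ).image Y) hsub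
  have hle : sSup (Y '' Icc a r) ≤ max 0 (sSup (Y '' Icc a θ)) + D := by
    refine csSup_le ((nonempty_Icc.2 (haθ.trans hθr)).image Y) ?_
    rintro _ ⟨s, hs, rfl⟩
    have hSθ := le_max_right 0 (sSup (Y '' Icc a θ))
    rcases le_total s θ with hsθ | hθs
    · linarith [le_csSup hbddθ (mem_image_of_mem Y ⟨hs.1, hsθ⟩)]
    · linarith [hinc s ⟨hθs, hs.2⟩, le_csSup hbddθ (mem_image_of_mem Y ⟨haθ, le_rfl⟩)]
  have hupper : max 0 (sSup (Y '' Icc a r)) ≤ max 0 (sSup (Y '' Icc a θ)) + D :=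
    max_le (by linarith [le_max_left 0 (sSup (Y '' Icc a θ))]) hle
  have hlower : max 0 (sSup (Y '' Icc a θ)) ≤ max 0 (sSup (Y '' Icc a r)) :=
    max_le_max le_rfl hmono
  rw [abs_sub_le_iff]
  constructor <;> linarith

theorem le_rpow_one_sub_mul_rpow {h T q : ℝ} (hh : 0 ≤ h) (hhT : h ≤ T) (hq : q ≤ 1) :
    h ≤ T ^ (1 - q) * h ^ q :=
  calc h = h ^ (1 - q) * h ^ q := by
        rw [← Real.rpow_add' hh (by simp), sub_add_cancel, Real.rpow_one]
    _ ≤ T ^ (1 - q) * h ^ q := by gcongr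

section FreePath

variable {X W : ℝ → ℝ} {T CX CW p : ℝ}

theorem abs_integral_sub_integral_le (hXc : ContinuousOn X (Icc 0 T))
    (hXsup : ∀ t ∈ Icc 0 T, |X t| ≤ CX) {θ s : ℝ} (hθ : 0 ≤ θ) (hθs : θ ≤ s) (hsT : s ≤ T) :
    |(∫ u in (0 : ℝ)..s, X u) - ∫ u in (0 : ℝ)..θ, X u| ≤ CX * (s - θ) := by
  have hint : ∀ b, 0 ≤ b → b ≤ T → IntervalIntegrable X MeasureTheory.volume (0 : ℝ) b := fun b hb hbT =>
    (hXc.mono (Icc_subset_Icc_right hbT)).intervalIntegrable_of_Icc hb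
  have hbound := intervalIntegral.norm_integral_le_of_norm_le_const (f := X) (a := θ) (b := s)
    (C := CX) fun u hu => by
      rw [uIoc_of_le hθs] at hu
      exact hXsup u ⟨hθ.trans hu.1.le, hu.2.trans hsT⟩
  rwa [intervalIntegral.integral_interval_sub_left (hint s (hθ.trans hθs) hsT)
    (hint θ hθ (hθs.trans hsT)), ← Real.norm_eq_abs, ← abs_of_nonneg (sub_nonneg.2 hθs)]

theorem abs_free_path_sub_le (x α σ : ℝ) (hσ : 0 ≤ σ) (hCW : 0 ≤ CW) (hp : 0 ≤ p)
    (hXc : ContinuousOn X (Icc 0 T)) (hXsup : ∀ t ∈ Icc 0 T, |X t| ≤ CX)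
    (hWHolder : ∀ s t : ℝ, 0 ≤ s → s ≤ t → t ≤ T → |W t - W s| ≤ CW * (t - s) ^ p)
    {θ s r : ℝ} (hθ : 0 ≤ θ) (hs : s ∈ Icc θ r) (hrT : r ≤ T) :
    |(-x + α * (∫ u in (0 : ℝ)..s, X u) - σ * W s) - (-x + α * (∫ u in (0 : ℝ)..θ, X u) - σ * W θ)|
      ≤ |α| * CX * (r - θ) + σ * CW * (r - θ) ^ p := by
  have hsT : s ≤ T := hs.2.trans hrT
  have hCX : 0 ≤ CX := (abs_nonneg _).trans (hXsup θ ⟨hθ, hs.1.trans hsT⟩)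
  have hdrift : |α * ((∫ u in (0 : ℝ)..s, X u) - ∫ u in (0 : ℝ)..θ, X u)| ≤ |α| * CX * (r - θ) := by
    rw [abs_mul, mul_assoc]
    gcongr
    exact (abs_integral_sub_integral_le hXc hXsup hθ hs.1 hsT).trans (by gcongr; exact hs.2)
  have hnoise : |σ * (W s - W θ)| ≤ σ * CW * (r - θ) ^ p := by
    rw [abs_mul, abs_of_nonneg hσ, mul_assoc]
    gcongr
    refine (hWHolder θ s hθ hs.1 hsT).trans ?_
    gcongr
    · linarith [hs.1]
    · exact hs.2
  calc _ = |α * ((∫ u in (0 : ℝ)..s, X u) - ∫ u in (0 : ℝ)..θ, X u) - σ * (W s - W θ)| := by ring_nf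
    _ ≤ _ := (abs_sub _ _).trans (add_le_add hdrift hnoise)

end FreePath

theorem stmt2_general (T x α σ H ε : ℝ) (hσ : 0 < σ)
    (hε : 0 < ε) (hεH : ε < H) (hH : H < 1)
    (W X : ℝ → ℝ)
    (hXc : ContinuousOn X (Icc 0 T))
    (CW : ℝ) (hWHolder : ∀ s t : ℝ, 0 ≤ s → s ≤ t → t ≤ T → |W t - W s| ≤ CW * (t - s) ^ (H - ε))
    (CX : ℝ) (hXsup : ∀ t ∈ Icc 0 T, |X t| ≤ CX)
    (hEq : ∀ t ∈ Icc 0 T,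
      X t = x - α * (∫ s in (0:ℝ)..t, X s) + σ * W t +
        max 0 (sSup ((fun s => -x + α * (∫ u in (0:ℝ)..s, X u) - σ * W s) '' Icc 0 t))) :
    ∀ θ r : ℝ, 0 ≤ θ → θ < r → r ≤ T →
      |X r - X θ| ≤ (2 * |α| * CX * T ^ (1 + ε - H) + 2 * σ * CW) * (r - θ) ^ (H - ε) := by
  intro θ r hθ hθr hrT
  set Y : ℝ → ℝ := fun s => -x + α * (∫ u in (0:ℝ)..s, X u) - σ * W s
  have hCW : 0 ≤ CW := nonneg_of_mul_nonneg_left ((abs_nonneg _).trans (hWHolder θ r hθ hθr.le hrT))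
    (Real.rpow_pos_of_pos (sub_pos.2 hθr) _)
  have hinc : ∀ {θ s r : ℝ}, 0 ≤ θ → s ∈ Icc θ r → r ≤ T →
      |Y s - Y θ| ≤ |α| * CX * (r - θ) + σ * CW * (r - θ) ^ (H - ε) := fun hθ hs hrT =>
    abs_free_path_sub_le x α σ hσ.le hCW (by linarith) hXc hXsup hWHolder hθ hs hrT
  have hbdd : BddAbove (Y '' Icc 0 r) := by
    refine ⟨Y 0 + (|α| * CX * (r - 0) + σ * CW * (r - 0) ^ (H - ε)), ?_⟩
    rintro _ ⟨s, hs, rfl⟩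
    linarith [le_abs_self (Y s - Y 0), hinc le_rfl hs hrT]
  have hL := abs_max_zero_sSup_sub_le hθ hθr.le hbdd
    fun s hs => (le_abs_self _).trans (hinc hθ hs hrT)
  have hdecomp : X r - X θ = -(Y r - Y θ) +
      (max 0 (sSup (Y '' Icc 0 r)) - max 0 (sSup (Y '' Icc 0 θ))) := by
    rw [hEq r ⟨hθ.trans hθr.le, hrT⟩, hEq θ ⟨hθ, hθr.le.trans hrT⟩]
    simp only [Y]
    ring
  have hCX : 0 ≤ CX := (abs_nonneg _).trans (hXsup θ ⟨hθ, hθr.le.trans hrT⟩)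
  have hshort := le_rpow_one_sub_mul_rpow (sub_pos.2 hθr).le (by linarith : r - θ ≤ T)
    (by linarith : H - ε ≤ 1)
  rw [show 1 - (H - ε) = 1 + ε - H by ring] at hshort
  calc |X r - X θ| ≤ |-(Y r - Y θ)| +
        |max 0 (sSup (Y '' Icc 0 r)) - max 0 (sSup (Y '' Icc 0 θ))| := hdecomp ▸ abs_add_le _ _
    _ ≤ 2 * (|α| * CX * (r - θ) + σ * CW * (r - θ) ^ (H - ε)) := by
        rw [abs_neg]
        linarith [hinc hθ ⟨hθr.le, le_rfl⟩ hrT]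
    _ ≤ _ := by linarith [mul_le_mul_of_nonneg_left hshort (mul_nonneg (abs_nonneg α) hCX)]

/-- Hölder continuity of the reflected path: `‖X‖_{H-ε,T} ≤ 2|α|‖X‖_{∞,T}T^{1+ε-H} + 2σ‖W‖_{H-ε,T}`,
stated pointwise with `CX` an a.e. sup bound for `X` and `CW` a Hölder constant for `W`. -/
theorem stmt2 (T x α σ H ε : ℝ) (hT : 0 < T) (hx : 0 ≤ x) (hσ : 0 < σ)
    (hε : 0 < ε) (hεH : ε < H) (hH : H < 1)
    (W X : ℝ → ℝ) (hWc : ContinuousOn W (Icc 0 T)) (hW0 : W 0 = 0)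
    (hXc : ContinuousOn X (Icc 0 T))
    (CW : ℝ) (hWHolder : ∀ s t : ℝ, 0 ≤ s → s ≤ t → t ≤ T → |W t - W s| ≤ CW * (t - s) ^ (H - ε))
    (CX : ℝ) (hXsup : ∀ t ∈ Icc 0 T, |X t| ≤ CX)
    (hEq : ∀ t ∈ Icc 0 T,
      X t = x - α * (∫ s in (0:ℝ)..t, X s) + σ * W t +
        max 0 (sSup ((fun s => -x + α * (∫ u in (0:ℝ)..s, X u) - σ * W s) '' Icc 0 t))) :
    ∀ θ r : ℝ, 0 ≤ θ → θ < r → r ≤ T →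
      |X r - X θ| ≤ (2 * |α| * CX * T ^ (1 + ε - H) + 2 * σ * CW) * (r - θ) ^ (H - ε) :=
  stmt2_general T x α σ H ε hσ hε hεH hH W X hXc CW hWHolder CX hXsup hEq
end

section
/- Let H > 1/2 and let Y(t) = ∫₀ᵗ s^{1/2−H} X(s) ds for a continuous X : [0,T] → ℝ with ‖X‖_{∞,T} = sup|X|. Then ∫₀ᵗ (t−s)^{1/2−H} s^{1/2−H} X(s) ds = t^{1/2−H} Y(t) + (H−1/2) ∫₀ᵗ (Y(t) − Y(t−s)) s^{−1/2−H} ds for every t ∈ (0,T]. -/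
/-!
Write `α = 1/2 - H ∈ (-1/2, 0)` and integrate by parts against
`F(r) = (t - r)^α (Y t - Y r)` on `(0, t)`, where `Y' = r^α X`. The increment bound
`|Y t - Y r| ≤ C (t - r)^(α+1)` (from `|X| ≤ M` and subadditivity of `x ↦ x^(α+1)`) makes
`F(r) → 0` as `r → t` and makes `(t - r)^(α-1) (Y t - Y r)` integrable, because
`2α + 1 = 2 - 2H > 0`; the boundary term at `0` is `t^α Y t`. Substituting `s = t - r` gives the
stated form.
-/

open MeasureTheory intervalIntegral Set Filter Topology

lemma rpow_sub_rpow_le_sub_rpow {a b p : ℝ} (ha : 0 ≤ a) (hab : a ≤ b) (hp0 : 0 ≤ p)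
    (hp1 : p ≤ 1) : b ^ p - a ^ p ≤ (b - a) ^ p := by
  have h := Real.rpow_add_le_add_rpow (sub_nonneg.2 hab) ha hp0 hp1
  rw [sub_add_cancel] at h
  linarith

lemma intervalIntegrable_of_continuousOn_Ioo_of_abs_le {f g : ℝ → ℝ} {a b : ℝ} (hab : a ≤ b)
    (hf : ContinuousOn f (Ioo a b)) (hg : IntervalIntegrable g volume a b)
    (hfg : ∀ x ∈ Ioo a b, |f x| ≤ g x) :
    IntervalIntegrable f volume a b := by
  rw [intervalIntegrable_iff_integrableOn_Ioo_of_le hab] at hg ⊢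
  refine hg.mono' (hf.aestronglyMeasurable measurableSet_Ioo) ?_
  filter_upwards [ae_restrict_mem measurableSet_Ioo] with x hx
  exact hfg x hx

lemma intervalIntegrable_sub_rpow_mul_rpow_mul {g : ℝ → ℝ} {t α γ : ℝ} (ht : 0 < t)
    (hα : -1 < α) (hγ : -1 < γ) (hg : ContinuousOn g (Icc 0 t)) :
    IntervalIntegrable (fun r => (t - r) ^ α * (r ^ γ * g r)) volume 0 t := by
  have hmid : (0 : ℝ) ≤ t / 2 := by positivity
  refine IntervalIntegrable.trans (b := t / 2) ?_ ?_
  · refine ((intervalIntegrable_rpow' hγ).mul_continuousOn ?_).continuousOn_mul ?_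
    · rw [uIcc_of_le hmid]
      exact hg.mono (Icc_subset_Icc_right (by linarith))
    · rw [uIcc_of_le hmid]
      refine (continuousOn_const.sub continuousOn_id).rpow_const fun r hr => Or.inl ?_
      exact (sub_pos.2 (by simp only [id]; linarith [hr.2])).ne'
  · have hsub : IntervalIntegrable (fun r => (t - r) ^ α) volume (t / 2) t := by
      have h := ((intervalIntegrable_rpow' (a := 0) (b := t / 2) hα).comp_sub_left t).symm
      rwa [sub_zero, sub_half] at h
    refine hsub.mul_continuousOn ?_
    rw [uIcc_of_le (by linarith)]
    refine ContinuousOn.mul (continuousOn_id.rpow_const fun r hr => Or.inl ?_)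
      (hg.mono (Icc_subset_Icc_left hmid))
    exact (by linarith [hr.1] : (0:ℝ) < r).ne'

section Primitive

variable {g : ℝ → ℝ} {α T : ℝ}

lemma intervalIntegrable_rpow_mul (hα : -1 < α) (hT : 0 ≤ T) (hg : ContinuousOn g (Icc 0 T)) :
    IntervalIntegrable (fun s => s ^ α * g s) volume 0 T :=
  (intervalIntegrable_rpow' hα).mul_continuousOn (by rwa [uIcc_of_le hT])

lemma continuousOn_integral_rpow_mul (hα : -1 < α) (hT : 0 ≤ T)
    (hg : ContinuousOn g (Icc 0 T)) :
    ContinuousOn (fun x => ∫ s in (0:ℝ)..x, s ^ α * g s) (Icc 0 T) := by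
  rw [← uIcc_of_le hT]
  exact continuousOn_primitive_interval' (intervalIntegrable_rpow_mul hα hT hg) left_mem_uIcc

lemma hasDerivAt_integral_rpow_mul (hα : -1 < α) (hg : ContinuousOn g (Icc 0 T)) {r : ℝ}
    (hr : r ∈ Ioo 0 T) :
    HasDerivAt (fun x => ∫ s in (0:ℝ)..x, s ^ α * g s) (r ^ α * g r) r := by
  have hcont : ContinuousOn (fun s => s ^ α * g s) (Ioo 0 T) :=
    (continuousOn_id.rpow_const fun s hs => Or.inl hs.1.ne').mul (hg.mono Ioo_subset_Icc_self)
  exact integral_hasDerivAt_right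
    (intervalIntegrable_rpow_mul hα hr.1.le (hg.mono (Icc_subset_Icc_right hr.2.le)))
    (hcont.stronglyMeasurableAtFilter isOpen_Ioo r hr)
    (hcont.continuousAt (Ioo_mem_nhds hr.1 hr.2))

lemma abs_integral_rpow_mul_le {a b M : ℝ} (hα : -1 < α) (hα0 : α ≤ 0) (ha : 0 ≤ a)
    (hab : a ≤ b) (hM0 : 0 ≤ M) (hM : ∀ s ∈ Ioc a b, |g s| ≤ M) :
    |∫ s in a..b, s ^ α * g s| ≤ M / (α + 1) * (b - a) ^ (α + 1) := by
  have hα1 : 0 < α + 1 := by linarith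
  calc |∫ s in a..b, s ^ α * g s| ≤ ∫ s in a..b, M * s ^ α := by
        rw [← Real.norm_eq_abs]
        refine norm_integral_le_of_norm_le hab (ae_of_all _ fun s hs => ?_)
          ((intervalIntegrable_rpow' hα).const_mul M)
        have hs0 : 0 ≤ s := ha.trans hs.1.le
        rw [Real.norm_eq_abs, abs_mul, abs_of_nonneg (Real.rpow_nonneg hs0 α), mul_comm]
        exact mul_le_mul_of_nonneg_right (hM s hs) (Real.rpow_nonneg hs0 α)
    _ = M / (α + 1) * (b ^ (α + 1) - a ^ (α + 1)) := by
        rw [intervalIntegral.integral_const_mul, integral_rpow (Or.inl hα)]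
        ring
    _ ≤ M / (α + 1) * (b - a) ^ (α + 1) := by
        gcongr
        exact rpow_sub_rpow_le_sub_rpow ha hab hα1.le (by linarith)

lemma abs_integral_rpow_mul_sub_le {a b M : ℝ} (hα : -1 < α) (hα0 : α ≤ 0) (ha : 0 ≤ a)
    (hab : a ≤ b) (hg : ContinuousOn g (Icc 0 b)) (hM : ∀ s ∈ Icc 0 b, |g s| ≤ M) :
    |(∫ s in (0:ℝ)..b, s ^ α * g s) - ∫ s in (0:ℝ)..a, s ^ α * g s| ≤
      M / (α + 1) * (b - a) ^ (α + 1) := by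
  rw [integral_interval_sub_left (intervalIntegrable_rpow_mul hα (ha.trans hab) hg)
    (intervalIntegrable_rpow_mul hα ha (hg.mono (Icc_subset_Icc_right hab)))]
  exact abs_integral_rpow_mul_le hα hα0 ha hab
    ((abs_nonneg _).trans (hM b ⟨ha.trans hab, le_rfl⟩))
    fun s hs => hM s ⟨ha.trans hs.1.le, hs.2⟩

end Primitive

lemma integral_sub_comp_mul_rpow (y : ℝ → ℝ) (t p : ℝ) :
    ∫ s in (0:ℝ)..t, (y t - y (t - s)) * s ^ p = ∫ r in (0:ℝ)..t, (t - r) ^ p * (y t - y r) := by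
  have hcomp := integral_comp_sub_left (a := 0) (b := t) (fun r => (t - r) ^ p * (y t - y r)) t
  rw [sub_self, sub_zero] at hcomp
  simp only [← hcomp, sub_sub_cancel, mul_comm]

section SingularKernel

variable {y : ℝ → ℝ} {t α β C : ℝ}

lemma intervalIntegrable_sub_rpow_mul_sub_of_abs_le (ht : 0 ≤ t)
    (hαβ : 0 < α + β) (hy : ContinuousOn y (Ioo 0 t))
    (hyt : ∀ r ∈ Ioo 0 t, |y t - y r| ≤ C * (t - r) ^ β) :
    IntervalIntegrable (fun r => (t - r) ^ (α - 1) * (y t - y r)) volume 0 t := by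
  have hbound : IntervalIntegrable (fun r => C * (t - r) ^ (α + β - 1)) volume 0 t := by
    have h := ((intervalIntegrable_rpow' (a := 0) (b := t) (r := α + β - 1)
      (by linarith)).comp_sub_left t).symm
    rw [sub_zero, sub_self] at h
    exact h.const_mul C
  refine intervalIntegrable_of_continuousOn_Ioo_of_abs_le ht ?_ hbound fun r hr => ?_
  · exact ((continuousOn_const.sub continuousOn_id).rpow_const
      fun r hr => Or.inl (sub_pos.2 hr.2).ne').mul (continuousOn_const.sub hy)
  · have htr : 0 < t - r := sub_pos.2 hr.2
    rw [abs_mul, abs_of_pos (Real.rpow_pos_of_pos htr _), show α + β - 1 = (α - 1) + β by ring,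
      Real.rpow_add htr, mul_left_comm]
    exact mul_le_mul_of_nonneg_left (hyt r hr) (Real.rpow_nonneg htr.le _)

lemma tendsto_sub_rpow_mul_sub_nhdsLT (ht : 0 < t)
    (hαβ : 0 < α + β) (hyt : ∀ r ∈ Ioo 0 t, |y t - y r| ≤ C * (t - r) ^ β) :
    Tendsto (fun r => (t - r) ^ α * (y t - y r)) (𝓝[<] t) (𝓝 0) := by
  refine squeeze_zero_norm' (a := fun r => C * (t - r) ^ (α + β)) ?_ ?_
  · filter_upwards [Ioo_mem_nhdsLT ht] with r hr
    have htr : 0 < t - r := sub_pos.2 hr.2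
    rw [Real.norm_eq_abs, abs_mul, abs_of_pos (Real.rpow_pos_of_pos htr _), Real.rpow_add htr,
      mul_left_comm]
    exact mul_le_mul_of_nonneg_left (hyt r hr) (Real.rpow_nonneg htr.le _)
  · have h : ContinuousAt (fun r => C * (t - r) ^ (α + β)) t :=
      continuousAt_const.mul ((continuousAt_const.sub continuousAt_id).rpow_const (Or.inr hαβ.le))
    simpa [Real.zero_rpow hαβ.ne'] using h.tendsto.mono_left nhdsWithin_le_nhds

theorem integral_sub_rpow_mul_eq_of_hasDerivAt {φ : ℝ → ℝ} (ht : 0 < t)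
    (hαβ : 0 < α + β) (hy : ContinuousOn y (Icc 0 t))
    (hy' : ∀ r ∈ Ioo 0 t, HasDerivAt y (φ r) r)
    (hyt : ∀ r ∈ Ioo 0 t, |y t - y r| ≤ C * (t - r) ^ β)
    (hφ : IntervalIntegrable (fun r => (t - r) ^ α * φ r) volume 0 t) :
    ∫ r in (0:ℝ)..t, (t - r) ^ α * φ r =
      t ^ α * (y t - y 0) - α * ∫ r in (0:ℝ)..t, (t - r) ^ (α - 1) * (y t - y r) := by
  have hint := intervalIntegrable_sub_rpow_mul_sub_of_abs_le ht.le hαβ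
    (hy.mono Ioo_subset_Icc_self) hyt
  have hderiv : ∀ r ∈ Ioo 0 t, HasDerivAt (fun r => (t - r) ^ α * (y t - y r))
      (-(α * ((t - r) ^ (α - 1) * (y t - y r))) - (t - r) ^ α * φ r) r := by
    intro r hr
    have hpow := ((hasDerivAt_id r).const_sub t).rpow_const (p := α)
      (Or.inl (sub_pos.2 hr.2).ne')
    refine (hpow.mul ((hy' r hr).const_sub (y t))).congr_deriv ?_
    simp only [id]
    ring
  have hleft : Tendsto (fun r => (t - r) ^ α * (y t - y r)) (𝓝[>] 0)
      (𝓝 (t ^ α * (y t - y 0))) := by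
    have hpow : ContinuousAt (fun r => (t - r) ^ α) 0 :=
      (continuousAt_const.sub continuousAt_id).rpow_const (Or.inl (by simpa using ht.ne'))
    have hy0 : Tendsto y (𝓝[>] 0) (𝓝 (y 0)) :=
      ((hy 0 ⟨le_rfl, ht.le⟩).mono_of_mem_nhdsWithin (Icc_mem_nhdsGT ht)).tendsto
    simpa using (hpow.tendsto.mono_left nhdsWithin_le_nhds).mul (hy0.const_sub (y t))
  have hFTC := integral_eq_sub_of_hasDerivAt_of_tendsto ht hderiv
    ((hint.const_mul α).neg.sub hφ) hleft (tendsto_sub_rpow_mul_sub_nhdsLT ht hαβ hyt)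
  rw [integral_sub (f := fun r => -(α * ((t - r) ^ (α - 1) * (y t - y r))))
    (hint.const_mul α).neg hφ, intervalIntegral.integral_neg,
    intervalIntegral.integral_const_mul] at hFTC
  linarith

end SingularKernel

theorem stmt10_general (H T : ℝ) (hH : 1 / 2 < H) (hH1 : H < 1)
    (X : ℝ → ℝ) (hXc : ContinuousOn X (Set.Icc 0 T))
    (Y : ℝ → ℝ) (hY : ∀ t ∈ Set.Icc (0:ℝ) T, Y t = ∫ s in (0:ℝ)..t, s ^ (1 / 2 - H) * X s) :
    ∀ t ∈ Set.Ioc (0:ℝ) T,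
      ∫ s in (0:ℝ)..t, (t - s) ^ (1 / 2 - H) * s ^ (1 / 2 - H) * X s =
        t ^ (1 / 2 - H) * Y t +
          (H - 1 / 2) * ∫ s in (0:ℝ)..t, (Y t - Y (t - s)) * s ^ (-(1 / 2) - H) := by
  rintro t ⟨ht, htT⟩
  have hα : -1 < 1 / 2 - H := by linarith
  obtain ⟨M, hM⟩ := isCompact_Icc.exists_bound_of_continuousOn hXc
  have hXt : ContinuousOn X (Icc 0 t) := hXc.mono (Icc_subset_Icc_right htT)
  set G : ℝ → ℝ := fun x => ∫ s in (0:ℝ)..x, s ^ (1 / 2 - H) * X s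
  have hYG : ∀ r ∈ Icc 0 t, Y r = G r := fun r hr => hY r ⟨hr.1, hr.2.trans htT⟩
  have hGt : ∀ r ∈ Ioo 0 t, |G t - G r| ≤ M / (1 / 2 - H + 1) * (t - r) ^ (1 / 2 - H + 1) :=
    fun r hr => abs_integral_rpow_mul_sub_le hα (by linarith) hr.1.le hr.2.le hXt
      fun s hs => hM s ⟨hs.1, hs.2.trans htT⟩
  have hYG_integral : ∫ r in (0:ℝ)..t, (t - r) ^ (1 / 2 - H - 1) * (Y t - Y r) =
      ∫ r in (0:ℝ)..t, (t - r) ^ (1 / 2 - H - 1) * (G t - G r) := by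
    refine integral_congr fun r hr => ?_
    rw [uIcc_of_le ht.le] at hr
    rw [hYG t ⟨ht.le, le_rfl⟩, hYG r hr]
  rw [integral_sub_comp_mul_rpow, show -(1 / 2) - H = 1 / 2 - H - 1 by ring, hYG_integral,
    integral_congr fun s _ => mul_assoc _ _ _,
    integral_sub_rpow_mul_eq_of_hasDerivAt ht (by linarith : 0 < 1 / 2 - H + (1 / 2 - H + 1))
      (continuousOn_integral_rpow_mul hα ht.le hXt)
      (fun r hr => hasDerivAt_integral_rpow_mul hα hXt hr) hGt
      (intervalIntegrable_sub_rpow_mul_rpow_mul ht hα hα hXt),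
    hYG t ⟨ht.le, le_rfl⟩]
  simp only [G, integral_same, sub_zero]
  ring

/-- For `1/2 < H < 1`, with `Y(t) = ∫₀ᵗ s^{1/2−H} X(s) ds` for continuous `X`,
`∫₀ᵗ (t−s)^{1/2−H} s^{1/2−H} X(s) ds
  = t^{1/2−H} Y(t) + (H−1/2) ∫₀ᵗ (Y(t) − Y(t−s)) s^{−1/2−H} ds` for every `t ∈ (0,T]`. -/
theorem stmt10 (H T : ℝ) (hH : 1 / 2 < H) (hH1 : H < 1) (hT : 0 < T)
    (X : ℝ → ℝ) (hXc : ContinuousOn X (Set.Icc 0 T))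
    (Y : ℝ → ℝ) (hY : ∀ t ∈ Set.Icc (0:ℝ) T, Y t = ∫ s in (0:ℝ)..t, s ^ (1 / 2 - H) * X s) :
    ∀ t ∈ Set.Ioc (0:ℝ) T,
      ∫ s in (0:ℝ)..t, (t - s) ^ (1 / 2 - H) * s ^ (1 / 2 - H) * X s =
        t ^ (1 / 2 - H) * Y t +
          (H - 1 / 2) * ∫ s in (0:ℝ)..t, (Y t - Y (t - s)) * s ^ (-(1 / 2) - H) :=
  stmt10_general H T hH hH1 X hXc Y hY
end

section
/- Let 1/2 < H < 1, ε ∈ (0, 1/2), and X : [0,T] → ℝ with finite sup norm ‖X‖_{∞,T} and (H−ε)-Hölder seminorm ‖X‖_{H−ε,T}. Define B(t) = t^{1/2−H} ∫₀ᵗ (X(t) − X(t−s)) s^{−1/2−H} ds + ∫₀ᵗ X(t−s)(t^{1/2−H} − (t−s)^{1/2−H}) s^{−1/2−H} ds. Then |B(t)| ≤ C(‖X‖_{H−ε,T} t^{1−H−ε} + ‖X‖_{∞,T} t^{1−2H}) for a constant C depending only on H and ε. -/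
/-!
The first term is controlled by Hölder continuity alone:
`|X t - X (t - s)| s^{-1/2-H} ≤ ‖X‖_{H-ε} s^{-1/2-ε}`, which is integrable at `0` since `ε < 1/2`.
For the second term, with `p = 1/2 - H ∈ (-1, 0)`, the nonnegative kernel
`((t - s)^p - t^p) s^{p-1}` is dominated by `(t/2)^{p-1} (s^p + (t - s)^p)`: near `s = 0` by the
mean value theorem, near `s = t` trivially. Integrating the majorant gives a multiple of `t^{2p} = t^{1-2H}`.
-/

open Set MeasureTheory intervalIntegral

lemma rpow_sub_rpow_le_of_nonpos {p a b : ℝ} (hp : p ≤ 0) (ha : 0 < a) (hab : a ≤ b) :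
    a ^ p - b ^ p ≤ -p * a ^ (p - 1) * (b - a) := by
  rcases hab.eq_or_lt with rfl | hab
  · simp
  obtain ⟨c, hc, hc'⟩ := exists_hasDerivAt_eq_slope (fun x : ℝ => x ^ p)
    (fun x : ℝ => p * x ^ (p - 1)) hab
    (continuousOn_id.rpow_const fun x hx => Or.inl (ha.trans_le hx.1).ne')
    (fun x hx => Real.hasDerivAt_rpow_const (Or.inl (ha.trans hx.1).ne'))
  have hca : c ^ (p - 1) ≤ a ^ (p - 1) := Real.rpow_le_rpow_of_nonpos ha hc.1.le (by linarith)
  have hmvt : b ^ p - a ^ p = p * c ^ (p - 1) * (b - a) := by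
    rw [hc', div_mul_cancel₀ _ (sub_pos.2 hab).ne']
  nlinarith [mul_le_mul_of_nonneg_right hca (sub_pos.2 hab).le]

lemma abs_intervalIntegral_le_of_abs_le_rpow {f : ℝ → ℝ} {N a t : ℝ} (ha : -1 < a) (ht : 0 ≤ t)
    (hf : ∀ s ∈ Ioc 0 t, |f s| ≤ N * s ^ a) :
    |∫ s in (0:ℝ)..t, f s| ≤ N * (t ^ (a + 1) / (a + 1)) := by
  rw [← Real.norm_eq_abs]
  calc ‖∫ s in (0:ℝ)..t, f s‖ ≤ ∫ s in (0:ℝ)..t, N * s ^ a :=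
        norm_integral_le_of_norm_le ht (ae_of_all _ hf)
          ((intervalIntegrable_rpow' ha).const_mul N)
    _ = N * (t ^ (a + 1) / (a + 1)) := by
        rw [intervalIntegral.integral_const_mul, integral_rpow (Or.inl ha),
          Real.zero_rpow (by linarith : a + 1 ≠ 0), sub_zero]

lemma abs_integral_sub_mul_rpow_le {X : ℝ → ℝ} {N α β t : ℝ} (hαβ : -1 < α + β) (ht : 0 ≤ t)
    (hX : ∀ s ∈ Ioc 0 t, |X t - X (t - s)| ≤ N * s ^ α) :
    |∫ s in (0:ℝ)..t, (X t - X (t - s)) * s ^ β| ≤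
      N * (t ^ (α + β + 1) / (α + β + 1)) := by
  refine abs_intervalIntegral_le_of_abs_le_rpow hαβ ht fun s hs => ?_
  have hsβ : 0 < s ^ β := Real.rpow_pos_of_pos hs.1 β
  rw [abs_mul, abs_of_pos hsβ, Real.rpow_add hs.1, ← mul_assoc]
  exact mul_le_mul_of_nonneg_right (hX s hs) hsβ.le

lemma rpow_sub_rpow_mul_rpow_le {p s t : ℝ} (hp : p ≤ 0) (hp1 : -1 ≤ p) (hs : 0 < s)
    (hst : s < t) :
    ((t - s) ^ p - t ^ p) * s ^ (p - 1) ≤ (t / 2) ^ (p - 1) * (s ^ p + (t - s) ^ p) := by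
  have hts : 0 < t - s := sub_pos.2 hst
  have hhalf : 0 < t / 2 := by linarith
  rcases le_or_gt s (t / 2) with hs2 | hs2
  · have hmvt := rpow_sub_rpow_le_of_nonpos hp hts (sub_le_self t hs.le)
    rw [sub_sub_cancel] at hmvt
    have hpow : (t - s) ^ (p - 1) ≤ (t / 2) ^ (p - 1) :=
      Real.rpow_le_rpow_of_nonpos hhalf (by linarith) (by linarith)
    calc ((t - s) ^ p - t ^ p) * s ^ (p - 1)
        ≤ (-p * (t / 2) ^ (p - 1) * s) * s ^ (p - 1) := by
          refine mul_le_mul_of_nonneg_right (hmvt.trans ?_) (Real.rpow_nonneg hs.le _)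
          exact mul_le_mul_of_nonneg_right (mul_le_mul_of_nonneg_left hpow (neg_nonneg.2 hp)) hs.le
      _ = -p * ((t / 2) ^ (p - 1) * s ^ p) := by
          rw [Real.rpow_sub_one hs.ne']
          field_simp
      _ ≤ (t / 2) ^ (p - 1) * s ^ p := by
          refine mul_le_of_le_one_left ?_ (by linarith)
          exact mul_nonneg (Real.rpow_nonneg hhalf.le _) (Real.rpow_nonneg hs.le _)
      _ ≤ (t / 2) ^ (p - 1) * (s ^ p + (t - s) ^ p) := by
          gcongr
          exact le_add_of_nonneg_right (Real.rpow_nonneg hts.le _)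
  · calc ((t - s) ^ p - t ^ p) * s ^ (p - 1)
        ≤ (t - s) ^ p * (t / 2) ^ (p - 1) :=
          mul_le_mul (sub_le_self _ (Real.rpow_nonneg (hs.trans hst).le _))
            (Real.rpow_le_rpow_of_nonpos hhalf hs2.le (by linarith))
            (Real.rpow_nonneg hs.le _) (Real.rpow_nonneg hts.le _)
      _ ≤ (t / 2) ^ (p - 1) * (s ^ p + (t - s) ^ p) := by
          rw [mul_comm]
          gcongr
          exact le_add_of_nonneg_left (Real.rpow_nonneg hs.le _)

lemma intervalIntegrable_sub_rpow {p t : ℝ} (hp : -1 < p) :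
    IntervalIntegrable (fun s => (t - s) ^ p) volume 0 t := by
  simpa using ((intervalIntegrable_rpow' hp (a := 0) (b := t)).comp_sub_left t).symm

lemma integral_sub_rpow {p t : ℝ} :
    ∫ s in (0:ℝ)..t, (t - s) ^ p = ∫ s in (0:ℝ)..t, s ^ p := by
  simp [integral_comp_sub_left (fun s : ℝ => s ^ p) t]

lemma half_rpow_mul_integral_eq {p t : ℝ} (ht : 0 < t) :
    (t / 2) ^ (p - 1) * (2 * (t ^ (p + 1) / (p + 1))) = 2 ^ (2 - p) / (p + 1) * t ^ (2 * p) := by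
  have h2 : (2:ℝ) ^ (2 - p) = 2 / 2 ^ (p - 1) := by
    rw [show 2 - p = 1 - (p - 1) by ring, Real.rpow_sub zero_lt_two, Real.rpow_one]
  have ht2 : t ^ (2 * p) = t ^ (p - 1) * t ^ (p + 1) := by
    rw [← Real.rpow_add ht]
    ring_nf
  rw [Real.div_rpow ht.le zero_le_two, h2, ht2]
  ring

lemma abs_integral_mul_rpow_sub_rpow_le {X : ℝ → ℝ} {N p t : ℝ} (hp : p ≤ 0) (hp1 : -1 < p)
    (ht : 0 < t) (hX : ∀ s ∈ Icc 0 t, |X s| ≤ N) :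
    |∫ s in (0:ℝ)..t, X (t - s) * (t ^ p - (t - s) ^ p) * s ^ (p - 1)| ≤
      2 ^ (2 - p) / (p + 1) * (N * t ^ (2 * p)) := by
  have hN : 0 ≤ N := (abs_nonneg _).trans (hX 0 ⟨le_rfl, ht.le⟩)
  have hmaj : IntervalIntegrable (fun s => s ^ p + (t - s) ^ p) volume 0 t :=
    (intervalIntegrable_rpow' hp1).add (intervalIntegrable_sub_rpow hp1)
  have hpoint : ∀ᵐ s, s ∈ Ioc 0 t →
      ‖X (t - s) * (t ^ p - (t - s) ^ p) * s ^ (p - 1)‖ ≤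
        N * ((t / 2) ^ (p - 1) * (s ^ p + (t - s) ^ p)) := by
    -- at `s = t` the kernel involves `0 ^ p = 0`, so that point is discarded
    filter_upwards [volume.ae_ne t] with s hne hs
    have hst : s < t := lt_of_le_of_ne hs.2 hne
    have hmono : t ^ p ≤ (t - s) ^ p :=
      Real.rpow_le_rpow_of_nonpos (sub_pos.2 hst) (sub_le_self t hs.1.le) hp
    rw [Real.norm_eq_abs, abs_mul, abs_mul, abs_of_nonpos (sub_nonpos.2 hmono),
      abs_of_pos (Real.rpow_pos_of_pos hs.1 _), neg_sub, mul_assoc]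
    exact mul_le_mul (hX _ ⟨(sub_pos.2 hst).le, sub_le_self t hs.1.le⟩)
      (rpow_sub_rpow_mul_rpow_le hp hp1.le hs.1 hst)
      (mul_nonneg (sub_nonneg.2 hmono) (Real.rpow_nonneg hs.1.le _)) hN
  calc _ ≤ ∫ s in (0:ℝ)..t, N * ((t / 2) ^ (p - 1) * (s ^ p + (t - s) ^ p)) :=
        norm_integral_le_of_norm_le ht.le hpoint ((hmaj.const_mul _).const_mul _)
    _ = N * ((t / 2) ^ (p - 1) * (2 * (t ^ (p + 1) / (p + 1)))) := by
        rw [intervalIntegral.integral_const_mul, intervalIntegral.integral_const_mul,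
          integral_add (intervalIntegrable_rpow' hp1) (intervalIntegrable_sub_rpow hp1),
          integral_sub_rpow, integral_rpow (Or.inl hp1),
          Real.zero_rpow (by linarith : p + 1 ≠ 0), sub_zero, two_mul]
    _ = 2 ^ (2 - p) / (p + 1) * (N * t ^ (2 * p)) := by
        rw [half_rpow_mul_integral_eq ht]
        ring

theorem stmt12_general (H ε : ℝ) (hH : 1 / 2 < H) (hH1 : H < 1) (hε2 : ε < 1 / 2) :
    ∃ C : ℝ, 0 < C ∧
      ∀ (T : ℝ) (_ : 0 < T) (X : ℝ → ℝ) (Ninf Nhol : ℝ),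
        (∀ t ∈ Set.Icc (0:ℝ) T, |X t| ≤ Ninf) →
        (∀ s t : ℝ, 0 ≤ s → s ≤ t → t ≤ T → |X t - X s| ≤ Nhol * (t - s) ^ (H - ε)) →
        ∀ t ∈ Set.Ioc (0:ℝ) T,
          |t ^ (1 / 2 - H) * (∫ s in (0:ℝ)..t, (X t - X (t - s)) * s ^ (-(1 / 2) - H)) +
              ∫ s in (0:ℝ)..t,
                X (t - s) * (t ^ (1 / 2 - H) - (t - s) ^ (1 / 2 - H)) * s ^ (-(1 / 2) - H)| ≤
            C * (Nhol * t ^ (1 - H - ε) + Ninf * t ^ (1 - 2 * H)) := by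
  have hK₁ : 0 < 1 / (1 / 2 - ε) := by
    have : 0 < 1 / 2 - ε := by linarith
    positivity
  have hK₂ : 0 < 2 ^ (3 / 2 + H) / (3 / 2 - H) := by
    have : 0 < 3 / 2 - H := by linarith
    positivity
  refine ⟨_, add_pos hK₁ hK₂, ?_⟩
  rintro T - X Ninf Nhol hinf hhol t ⟨ht, htT⟩
  have hA : |t ^ (1 / 2 - H) * ∫ s in (0:ℝ)..t, (X t - X (t - s)) * s ^ (-(1 / 2) - H)| ≤
      1 / (1 / 2 - ε) * (Nhol * t ^ (1 - H - ε)) := by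
    have h := abs_integral_sub_mul_rpow_le (X := X) (N := Nhol) (α := H - ε)
      (β := -(1 / 2) - H) (by linarith) ht.le fun s hs => by
        simpa using hhol (t - s) t (by linarith [hs.2]) (by linarith [hs.1]) htT
    rw [show H - ε + (-(1 / 2) - H) + 1 = 1 / 2 - ε by ring] at h
    rw [abs_mul, abs_of_pos (Real.rpow_pos_of_pos ht _),
      show 1 - H - ε = (1 / 2 - H) + (1 / 2 - ε) by ring, Real.rpow_add ht]
    calc _ ≤ t ^ (1 / 2 - H) * (Nhol * (t ^ (1 / 2 - ε) / (1 / 2 - ε))) := by gcongr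
      _ = _ := by ring
  have hB := abs_integral_mul_rpow_sub_rpow_le (X := X) (p := 1 / 2 - H) (by linarith)
    (by linarith) ht fun s hs => hinf s ⟨hs.1, hs.2.trans htT⟩
  rw [show 1 / 2 - H - 1 = -(1 / 2) - H by ring, show 2 - (1 / 2 - H) = 3 / 2 + H by ring,
    show 1 / 2 - H + 1 = 3 / 2 - H by ring, show 2 * (1 / 2 - H) = 1 - 2 * H by ring] at hB
  -- the two bounds force `Nhol * t ^ (1 - H - ε)` and `Ninf * t ^ (1 - 2 * H)` to be nonnegative
  have hx := (mul_nonneg_iff_of_pos_left hK₁).1 ((abs_nonneg _).trans hA)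
  have hy := (mul_nonneg_iff_of_pos_left hK₂).1 ((abs_nonneg _).trans hB)
  calc _ ≤ _ := abs_add_le _ _
    _ ≤ _ := add_le_add hA hB
    _ ≤ _ := by nlinarith [mul_nonneg hK₁.le hy, mul_nonneg hK₂.le hx]

/-- Bound on the singular term `B(t)`: there is a constant `C` depending only on `H` and `ε`
such that for any `T`, any `X` with sup bound `Ninf` and `(H−ε)`-Hölder bound `Nhol` on `[0,T]`,
`|B(t)| ≤ C (Nhol t^{1−H−ε} + Ninf t^{1−2H})` for all `t ∈ (0,T]`, where
`B(t) = t^{1/2−H} ∫₀ᵗ (X(t)−X(t−s)) s^{−1/2−H} ds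
      + ∫₀ᵗ X(t−s)(t^{1/2−H}−(t−s)^{1/2−H}) s^{−1/2−H} ds`. -/
theorem stmt12 (H ε : ℝ) (hH : 1 / 2 < H) (hH1 : H < 1) (hε : 0 < ε) (hε2 : ε < 1 / 2) :
    ∃ C : ℝ, 0 < C ∧
      ∀ (T : ℝ) (_ : 0 < T) (X : ℝ → ℝ) (Ninf Nhol : ℝ),
        (∀ t ∈ Set.Icc (0:ℝ) T, |X t| ≤ Ninf) →
        (∀ s t : ℝ, 0 ≤ s → s ≤ t → t ≤ T → |X t - X s| ≤ Nhol * (t - s) ^ (H - ε)) →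
        ∀ t ∈ Set.Ioc (0:ℝ) T,
          |t ^ (1 / 2 - H) * (∫ s in (0:ℝ)..t, (X t - X (t - s)) * s ^ (-(1 / 2) - H)) +
              ∫ s in (0:ℝ)..t,
                X (t - s) * (t ^ (1 / 2 - H) - (t - s) ^ (1 / 2 - H)) * s ^ (-(1 / 2) - H)| ≤
            C * (Nhol * t ^ (1 - H - ε) + Ninf * t ^ (1 - 2 * H)) :=
  stmt12_general H ε hH hH1 hε2
end
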